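/- Let A = [[0, Id_d],[−Id_d, 2·Id_d]], and for t > 0 let Σ_t = ∫₀^t e^{−(t−r)A} ΣΣᵀ e^{−(t−r)Aᵀ} dr with Σ = [[0],[2·Id_d]]. Define the kinetic OU semigroup by P_t f(u) = ∫ f(e^{−tA}u + Σ_t^{1/2} z) γ^{2d}(z) dz. There exists a universal constant C > 0 such that for every continuously differentiable f : ℝ^{2d} → ℝ with |f(u)| + ‖∇f(u)‖ ≤ C₀ e^{a‖u‖} for some constants C₀, a ≥ 0, and every t > 0 and u ∈ ℝ^{2d}, one has ‖∇(P_t f)(u)‖ ≤ C e^{−t/2} P_t(‖∇f‖)(u). -/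

import Mathlib

open MeasureTheory Real Set Matrix
open scoped ENNReal RealInnerProductSpace

noncomputable section

/-- The phase space `ℝ^{2d}`, with points `u = (x, v)`: coordinates `Sum.inl i` are the
`x`-coordinates and `Sum.inr i` the `v`-coordinates. -/
abbrev Phase (d : ℕ) := EuclideanSpace ℝ (Fin d ⊕ Fin d)

/-- The drift matrix `A = [[0, Id_d], [−Id_d, 2·Id_d]]` of the kinetic OU process. -/
def kinA (d : ℕ) : Matrix (Fin d ⊕ Fin d) (Fin d ⊕ Fin d) ℝ :=
  Matrix.fromBlocks 0 1 (-1) (2 • (1 : Matrix (Fin d) (Fin d) ℝ))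

/-- `Σ Σᵀ = [[0, 0], [0, 4·Id_d]]`, where `Σ = [[0], [2·Id_d]]`. -/
def kinSigmaSq (d : ℕ) : Matrix (Fin d ⊕ Fin d) (Fin d ⊕ Fin d) ℝ :=
  Matrix.fromBlocks 0 0 0 (4 • (1 : Matrix (Fin d) (Fin d) ℝ))

/-- `Σ_t = ∫₀^t e^{−(t−r)A} Σ Σᵀ e^{−(t−r)Aᵀ} dr`, defined entrywise. -/
def kinCov (d : ℕ) (t : ℝ) : Matrix (Fin d ⊕ Fin d) (Fin d ⊕ Fin d) ℝ :=
  fun i j => ∫ r in Set.Ioc (0 : ℝ) t,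
    (NormedSpace.exp ((-(t - r)) • kinA d) * kinSigmaSq d *
      NormedSpace.exp ((-(t - r)) • (kinA d)ᵀ)) i j

/-- The kinetic OU transition kernel `q_t(u₁, u)`: the Gaussian density on `ℝ^{2d}` with mean
`e^{−tA} u₁` and covariance `Σ_t`. -/
def kinKernel (d : ℕ) (t : ℝ) (u₁ u : Phase d) : ℝ :=
  (2 * π) ^ (-(2 * d : ℝ) / 2) * (kinCov d t).det ^ (-(1 : ℝ) / 2) *
    Real.exp (-(dotProduct
        ((kinCov d t)⁻¹.mulVec
          (fun i => (WithLp.equiv 2 _) u i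
            - (NormedSpace.exp ((-t) • kinA d)).mulVec ((WithLp.equiv 2 _) u₁) i))
        (fun i => (WithLp.equiv 2 _) u i
          - (NormedSpace.exp ((-t) • kinA d)).mulVec ((WithLp.equiv 2 _) u₁) i)) / 2)

/-- The kinetic OU marginal densities `p_t(u) = ∫ p₀(u') q_t(u', u) du'`. -/
def kinMarginal (d : ℕ) (p₀ : Phase d → ℝ) (t : ℝ) (u : Phase d) : ℝ :=
  ∫ u', p₀ u' * kinKernel d t u' u

/-- The standard Gaussian density on the phase space `ℝ^{2d}`. -/
def gauss2 (d : ℕ) (u : Phase d) : ℝ :=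
  (2 * π) ^ (-(2 * d : ℝ) / 2) * Real.exp (-‖u‖ ^ 2 / 2)

/-- The positive square root of a positive semidefinite matrix (junk value `0` otherwise). -/
def matSqrt (d : ℕ) (M : Matrix (Fin d ⊕ Fin d) (Fin d ⊕ Fin d) ℝ) :
    Matrix (Fin d ⊕ Fin d) (Fin d ⊕ Fin d) ℝ :=
  open scoped Classical in
  if h : M.PosSemidef then
    (h.1.eigenvectorUnitary : Matrix (Fin d ⊕ Fin d) (Fin d ⊕ Fin d) ℝ) *
      diagonal (fun i => √(h.1.eigenvalues i)) *
      (star h.1.eigenvectorUnitary : Matrix (Fin d ⊕ Fin d) (Fin d ⊕ Fin d) ℝ)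
  else 0

/-- The kinetic OU semigroup `P_t f(u) = ∫ f(e^{−tA} u + Σ_t^{1/2} z) γ^{2d}(z) dz`. -/
def kinSemigroup (d : ℕ) (t : ℝ) (f : Phase d → ℝ) (u : Phase d) : ℝ :=
  ∫ z : Phase d,
    f ((WithLp.equiv 2 _).symm
        ((NormedSpace.exp ((-t) • kinA d)).mulVec ((WithLp.equiv 2 _) u)
          + (matSqrt d (kinCov d t)).mulVec ((WithLp.equiv 2 _) z)))
      * gauss2 d z

/-!
Write `P_t f(u) = ∫ f(L u + S z) γ(z) dz` with `L = e^{-tA}` and `S = Σ_t^{1/2}`. Exponential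
growth of `f` and `∇f` is dominated by the Gaussian tails, so one may differentiate under the
integral: `D(P_t f)(u) = ∫ Df(L u + S z) ∘ L γ(z) dz`, whence `‖∇P_t f(u)‖ ≤ ‖L‖ P_t(‖∇f‖)(u)`.
Finally `A = I + N` with `N² = 0` and `‖N‖ ≤ 2`, so `e^{-tA} = e^{-t}(I - tN)` has operator norm
at most `e^{-t}(1 + 2t) ≤ 4 e^{-t/2}`.
-/

theorem NormedSpace.exp_eq_one_add_of_mul_self_eq_zero {𝔸 : Type*} [Ring 𝔸] [Algebra ℚ 𝔸]
    [TopologicalSpace 𝔸] [IsTopologicalRing 𝔸] {x : 𝔸} (hx : x * x = 0) :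
    NormedSpace.exp x = 1 + x := by
  have hpow : ∀ n, 2 ≤ n → x ^ n = 0 := fun n hn => by
    rw [← Nat.sub_add_cancel hn, pow_add, sq, hx, mul_zero]
  rw [NormedSpace.exp_eq_tsum_rat]
  dsimp only
  rw [tsum_eq_sum (s := Finset.range 2)]
  · simp [Finset.sum_range_succ]
  · intro n hn
    simp [hpow n (by simp at hn; omega)]

theorem Matrix.exp_smul_one {ι : Type*} [Fintype ι] [DecidableEq ι] (c : ℝ) :
    NormedSpace.exp (c • (1 : Matrix ι ι ℝ)) = Real.exp c • 1 := by
  rw [smul_one_eq_diagonal, smul_one_eq_diagonal, exp_diagonal, Real.exp_eq_exp_ℝ,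
    Pi.exp_def]

def kinN (d : ℕ) : Matrix (Fin d ⊕ Fin d) (Fin d ⊕ Fin d) ℝ :=
  fromBlocks (-1) 1 (-1) 1

theorem kinA_eq_one_add_kinN (d : ℕ) : kinA d = 1 + kinN d := by
  rw [kinA, kinN, ← fromBlocks_one, fromBlocks_add]
  norm_num [two_smul]

theorem kinN_mul_self (d : ℕ) : kinN d * kinN d = 0 := by
  simp [kinN, fromBlocks_multiply]

theorem exp_neg_smul_kinA (d : ℕ) (t : ℝ) :
    NormedSpace.exp ((-t) • kinA d) = Real.exp (-t) • (1 - t • kinN d) := by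
  have hcomm : Commute ((-t) • (1 : Matrix (Fin d ⊕ Fin d) (Fin d ⊕ Fin d) ℝ)) ((-t) • kinN d) :=
    ((Commute.one_left _).smul_left _).smul_right _
  rw [kinA_eq_one_add_kinN, smul_add, exp_add_of_commute _ _ hcomm, exp_smul_one,
    NormedSpace.exp_eq_one_add_of_mul_self_eq_zero (by rw [smul_mul_smul_comm, kinN_mul_self,
      smul_zero]), smul_mul_assoc, one_mul, neg_smul, sub_eq_add_neg]

theorem norm_toEuclideanCLM_kinN_apply_le (d : ℕ) (w : Phase d) :
    ‖toEuclideanCLM (𝕜 := ℝ) (kinN d) w‖ ≤ 2 * ‖w‖ := by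
  have happly : ∀ i,
      toEuclideanCLM (𝕜 := ℝ) (kinN d) w (Sum.inl i) = w (Sum.inr i) - w (Sum.inl i) ∧
      toEuclideanCLM (𝕜 := ℝ) (kinN d) w (Sum.inr i) = w (Sum.inr i) - w (Sum.inl i) := fun i => by
    simp [kinN, mulVec, dotProduct, Fintype.sum_sum_type, fromBlocks, one_apply, sub_eq_neg_add]
  refine le_of_pow_le_pow_left₀ two_ne_zero (by positivity) ?_
  simp only [mul_pow, EuclideanSpace.norm_sq_eq, Real.norm_eq_abs, sq_abs, Fintype.sum_sum_type,
    happly, Finset.mul_sum, ← Finset.sum_add_distrib]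
  gcongr with i
  nlinarith [sq_nonneg (w (Sum.inr i) + w (Sum.inl i))]

theorem exp_neg_mul_one_add_two_mul_le (t : ℝ) :
    Real.exp (-t) * (1 + 2 * t) ≤ 4 * Real.exp (-t / 2) := by
  have h : 1 + 2 * t ≤ 4 * Real.exp (t / 2) := by linarith [Real.add_one_le_exp (t / 2)]
  calc Real.exp (-t) * (1 + 2 * t) ≤ Real.exp (-t) * (4 * Real.exp (t / 2)) := by gcongr
    _ = 4 * Real.exp (-t / 2) := by rw [mul_left_comm, ← Real.exp_add]; ring_nf

theorem norm_exp_neg_smul_kinA_le (d : ℕ) {t : ℝ} (ht : 0 ≤ t) :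
    ‖toEuclideanCLM (𝕜 := ℝ) (NormedSpace.exp ((-t) • kinA d))‖ ≤ 4 * Real.exp (-t / 2) := by
  refine ContinuousLinearMap.opNorm_le_bound _ (by positivity) fun w => ?_
  have hsub : ‖w - t • toEuclideanCLM (𝕜 := ℝ) (kinN d) w‖ ≤ (1 + 2 * t) * ‖w‖ := by
    calc _ ≤ ‖w‖ + t * ‖toEuclideanCLM (𝕜 := ℝ) (kinN d) w‖ := by
          grw [norm_sub_le, norm_smul, Real.norm_of_nonneg ht]
      _ ≤ (1 + 2 * t) * ‖w‖ := by nlinarith [norm_toEuclideanCLM_kinN_apply_le d w]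
  calc _ = Real.exp (-t) * ‖w - t • toEuclideanCLM (𝕜 := ℝ) (kinN d) w‖ := by
        rw [exp_neg_smul_kinA]
        simp [norm_smul]
    _ ≤ Real.exp (-t) * (1 + 2 * t) * ‖w‖ := by rw [mul_assoc]; gcongr
    _ ≤ 4 * Real.exp (-t / 2) * ‖w‖ := by grw [exp_neg_mul_one_add_two_mul_le t]

theorem gauss2_pos (d : ℕ) (z : Phase d) : 0 < gauss2 d z := by
  unfold gauss2; positivity

theorem continuous_gauss2 (d : ℕ) : Continuous (gauss2 d) := by
  unfold gauss2; fun_prop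

theorem integrable_exp_mul_norm_mul_gauss2 (d : ℕ) (b : ℝ) :
    Integrable (fun z : Phase d => Real.exp (b * ‖z‖) * gauss2 d z) := by
  have hquarter : Integrable (fun z : Phase d => Real.exp (-(1 / 4) * ‖z‖ ^ 2)) := by
    refine (GaussianFourier.integrable_cexp_neg_mul_sq_norm_add (V := Phase d) (b := 1 / 4)
      (by norm_num) 0 0).norm.congr (ae_of_all _ fun z => ?_)
    simp [Complex.norm_exp, ← Complex.ofReal_pow]
  refine (hquarter.const_mul ((2 * π) ^ (-(2 * d : ℝ) / 2) * Real.exp (b ^ 2))).mono'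
    ((Continuous.mul (by fun_prop) (continuous_gauss2 d)).aestronglyMeasurable)
    (ae_of_all _ fun z => ?_)
  have hexponent : b * ‖z‖ + -‖z‖ ^ 2 / 2 ≤ b ^ 2 + -(1 / 4) * ‖z‖ ^ 2 := by
    nlinarith [sq_nonneg (b - ‖z‖ / 2)]
  rw [Real.norm_of_nonneg (by positivity [gauss2_pos d z]), gauss2, mul_left_comm,
    ← Real.exp_add, mul_assoc, ← Real.exp_add]
  gcongr

theorem integrable_mul_of_norm_le_exp {Z : Type*} [Norm Z] [MeasurableSpace Z] {μ : Measure Z}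
    {ρ g : Z → ℝ} {C b : ℝ} (hg : AEStronglyMeasurable g μ)
    (hρ : AEStronglyMeasurable ρ μ) (hρ_nonneg : ∀ z, 0 ≤ ρ z)
    (hρ_exp : Integrable (fun z => Real.exp (b * ‖z‖) * ρ z) μ)
    (hg_le : ∀ z, ‖g z‖ ≤ C * Real.exp (b * ‖z‖)) :
    Integrable (fun z => g z * ρ z) μ := by
  refine (hρ_exp.const_mul C).mono' (hg.mul hρ) (ae_of_all _ fun z => ?_)
  rw [norm_mul, Real.norm_of_nonneg (hρ_nonneg z), ← mul_assoc]
  exact mul_le_mul_of_nonneg_right (hg_le z) (hρ_nonneg z)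

section Smoothing

variable {E : Type*} [NormedAddCommGroup E] [NormedSpace ℝ E]

theorem norm_apply_add_le_exp {F : Type*} [SeminormedAddCommGroup F] {g : E → F} {C a : ℝ}
    (hC : 0 ≤ C) (ha : 0 ≤ a) (hg : ∀ y, ‖g y‖ ≤ C * Real.exp (a * ‖y‖))
    (S : E →L[ℝ] E) (x z : E) :
    ‖g (x + S z)‖ ≤ C * Real.exp (a * ‖x‖) * Real.exp (a * ‖S‖ * ‖z‖) := by
  calc ‖g (x + S z)‖ ≤ C * Real.exp (a * ‖x + S z‖) := hg _
    _ ≤ C * Real.exp (a * (‖x‖ + ‖S‖ * ‖z‖)) := by grw [norm_add_le, S.le_opNorm]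
    _ = C * Real.exp (a * ‖x‖) * Real.exp (a * ‖S‖ * ‖z‖) := by
      rw [mul_add, Real.exp_add, mul_assoc a, mul_assoc]

variable [MeasurableSpace E] [OpensMeasurableSpace E] [SecondCountableTopology E]
  {μ : Measure E} {ρ : E → ℝ}

theorem hasFDerivAt_integral_comp_add {f : E → ℝ} (hf : ContDiff ℝ 1 f) {C a : ℝ}
    (hC : 0 ≤ C) (ha : 0 ≤ a) (hf_le : ∀ y, ‖f y‖ ≤ C * Real.exp (a * ‖y‖))
    (hf'_le : ∀ y, ‖fderiv ℝ f y‖ ≤ C * Real.exp (a * ‖y‖))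
    (hρ : AEStronglyMeasurable ρ μ) (hρ_nonneg : ∀ z, 0 ≤ ρ z)
    (hρ_exp : ∀ b, Integrable (fun z => Real.exp (b * ‖z‖) * ρ z) μ)
    (L S : E →L[ℝ] E) (u : E) :
    HasFDerivAt (fun x => ∫ z, f (L x + S z) * ρ z ∂μ)
      (∫ z, ρ z • (fderiv ℝ f (L u + S z)).comp L ∂μ) u := by
  have hcont : ∀ x, Continuous fun z => L x + S z := fun x => by fun_prop
  have hf'_bound : ∀ z, ∀ x ∈ Metric.ball u 1, ‖ρ z • (fderiv ℝ f (L x + S z)).comp L‖ ≤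
      ‖L‖ * (C * Real.exp (a * (‖L‖ * (‖u‖ + 1)))) * (Real.exp (a * ‖S‖ * ‖z‖) * ρ z) := by
    intro z x hx
    have hLx : ‖L x‖ ≤ ‖L‖ * (‖u‖ + 1) := by
      grw [L.le_opNorm, norm_le_norm_add_norm_sub' x u, (mem_ball_iff_norm.mp hx).le]
    have hρz := hρ_nonneg z
    calc ‖ρ z • (fderiv ℝ f (L x + S z)).comp L‖
        ≤ ρ z * (‖fderiv ℝ f (L x + S z)‖ * ‖L‖) := by
          rw [norm_smul, Real.norm_of_nonneg hρz]
          exact mul_le_mul_of_nonneg_left (ContinuousLinearMap.opNorm_comp_le _ _) hρz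
      _ ≤ ρ z * (C * Real.exp (a * ‖L x‖) * Real.exp (a * ‖S‖ * ‖z‖) * ‖L‖) := by
          grw [norm_apply_add_le_exp hC ha hf'_le]
      _ ≤ ρ z * (C * Real.exp (a * (‖L‖ * (‖u‖ + 1))) * Real.exp (a * ‖S‖ * ‖z‖) * ‖L‖) := by
          grw [hLx]
      _ = _ := by ring
  refine hasFDerivAt_integral_of_dominated_of_fderiv_le (Metric.ball_mem_nhds u one_pos)
    (.of_forall fun x => (hf.continuous.comp (hcont x)).aestronglyMeasurable.mul hρ)
    (integrable_mul_of_norm_le_exp (hf.continuous.comp (hcont u)).aestronglyMeasurable hρ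
      hρ_nonneg (hρ_exp _) (norm_apply_add_le_exp hC ha hf_le S (L u)))
    (hρ.smul (((hf.continuous_fderiv one_ne_zero).comp (hcont u)).clm_comp_const
      L).aestronglyMeasurable)
    (ae_of_all _ hf'_bound) ((hρ_exp _).const_mul _) (ae_of_all _ fun z x _ => ?_)
  exact (((hf.differentiable one_ne_zero _).hasFDerivAt.comp x
    (L.hasFDerivAt.add_const (S z))).mul_const (ρ z))

theorem norm_fderiv_integral_comp_add_le {f : E → ℝ} (hf : ContDiff ℝ 1 f) {C a : ℝ}
    (hC : 0 ≤ C) (ha : 0 ≤ a) (hf_le : ∀ y, ‖f y‖ ≤ C * Real.exp (a * ‖y‖))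
    (hf'_le : ∀ y, ‖fderiv ℝ f y‖ ≤ C * Real.exp (a * ‖y‖))
    (hρ : AEStronglyMeasurable ρ μ) (hρ_nonneg : ∀ z, 0 ≤ ρ z)
    (hρ_exp : ∀ b, Integrable (fun z => Real.exp (b * ‖z‖) * ρ z) μ)
    (L S : E →L[ℝ] E) (u : E) :
    ‖fderiv ℝ (fun x => ∫ z, f (L x + S z) * ρ z ∂μ) u‖ ≤
      ‖L‖ * ∫ z, ‖fderiv ℝ f (L u + S z)‖ * ρ z ∂μ := by
  have hint : Integrable (fun z => ‖fderiv ℝ f (L u + S z)‖ * ρ z) μ :=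
    integrable_mul_of_norm_le_exp (by fun_prop (disch := exact hf.continuous_fderiv one_ne_zero))
      hρ hρ_nonneg (hρ_exp _) (fun z => by
        simpa using norm_apply_add_le_exp hC ha hf'_le S (L u) z)
  rw [(hasFDerivAt_integral_comp_add hf hC ha hf_le hf'_le hρ hρ_nonneg hρ_exp L S u).fderiv,
    ← integral_const_mul]
  refine norm_integral_le_of_norm_le (hint.const_mul _) (ae_of_all _ fun z => ?_)
  rw [norm_smul, Real.norm_of_nonneg (hρ_nonneg z), mul_comm ‖L‖, mul_comm _ (ρ z), mul_assoc]
  exact mul_le_mul_of_nonneg_left (ContinuousLinearMap.opNorm_comp_le _ _) (hρ_nonneg z)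

end Smoothing

theorem norm_gradient_eq_norm_fderiv {F : Type*} [NormedAddCommGroup F] [InnerProductSpace ℝ F]
    [CompleteSpace F] (g : F → ℝ) (x : F) : ‖gradient g x‖ = ‖fderiv ℝ g x‖ :=
  (InnerProductSpace.toDual ℝ F).symm.norm_map _

theorem kinSemigroup_eq_integral (d : ℕ) (t : ℝ) (g : Phase d → ℝ) :
    kinSemigroup d t g = fun u => ∫ z, g (toEuclideanCLM (𝕜 := ℝ)
      (NormedSpace.exp ((-t) • kinA d)) u + toEuclideanCLM (𝕜 := ℝ) (matSqrt d (kinCov d t)) z) *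
        gauss2 d z :=
  rfl

theorem stmt15 :
    ∃ C > (0 : ℝ), ∀ (d : ℕ) (f : Phase d → ℝ) (C₀ a : ℝ), 0 ≤ C₀ → 0 ≤ a →
      ContDiff ℝ 1 f →
      (∀ u, |f u| + ‖gradient f u‖ ≤ C₀ * Real.exp (a * ‖u‖)) →
      ∀ t > (0 : ℝ), ∀ u : Phase d,
        ‖gradient (kinSemigroup d t f) u‖ ≤
          C * Real.exp (-t / 2) * kinSemigroup d t (fun w => ‖gradient f w‖) u := by
  refine ⟨4, by norm_num, fun d f C₀ a hC₀ ha hf hgrowth t ht u => ?_⟩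
  have hf_le : ∀ y, ‖f y‖ ≤ C₀ * Real.exp (a * ‖y‖) := fun y => by
    linarith [hgrowth y, norm_nonneg (gradient f y), Real.norm_eq_abs (f y)]
  have hf'_le : ∀ y, ‖fderiv ℝ f y‖ ≤ C₀ * Real.exp (a * ‖y‖) := fun y => by
    linarith [hgrowth y, abs_nonneg (f y), norm_gradient_eq_norm_fderiv f y]
  rw [norm_gradient_eq_norm_fderiv, kinSemigroup_eq_integral, kinSemigroup_eq_integral]
  refine (norm_fderiv_integral_comp_add_le hf hC₀ ha hf_le hf'_le
    (continuous_gauss2 d).aestronglyMeasurable (fun z => (gauss2_pos d z).le)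
    (integrable_exp_mul_norm_mul_gauss2 d) _ _ u).trans ?_
  simp only [norm_gradient_eq_norm_fderiv]
  gcongr
  · exact integral_nonneg fun z => mul_nonneg (norm_nonneg _) (gauss2_pos d z).le
  · exact norm_exp_neg_smul_kinA_le d ht.le
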